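/- arXiv:math/0310400 — 6 statements merged into one kernel-verified Lean document; each statement's English description precedes it below -/
import Mathlib

section
/- (Serret's theorem, used in Lemma 1.) Let α and β be irrational real numbers with regular continued fraction digits a_k(α) and a_k(β). Then the following are equivalent: (1) there exist integers a, b, c, d with ad − bc = ±1 and β = (aα + b)/(cα + d); (2) the continued fraction expansions of α and β have the same tail, i.e. there exist natural numbers k and m such that a_{k+i}(α) = a_{m+i}(β) for all i ≥ 0. -/
/-!
Both conditions amount to `α` and `β` sharing a complete quotient, `gaussIter β m = gaussIter α n`.
Equal digit tails give equal complete quotients, because an irrational number is the limit of the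
convergents built from its digits. Each complete quotient of `x` is related to `x` by an integer
Möbius transformation of determinant `±1`, which gives one direction. For the other, `SL(2, ℤ)` is
generated by `S` and `T`, so it suffices that `x ↦ x + 1`, `x ↦ -x` and `x ↦ x⁻¹` preserve the
complete quotients up to a shift of index, which is a computation with fractional parts.
-/

/-- The iterates of the Gauss map starting from `x`. -/
noncomputable def gaussIter (x : ℝ) : ℕ → ℝ
  | 0 => x
  | k + 1 => 1 / (gaussIter x k - ⌊gaussIter x k⌋)

/-- The regular continued fraction digits of `x`. -/
noncomputable def cfDigit (x : ℝ) (k : ℕ) : ℤ := ⌊gaussIter x k⌋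

open Matrix ModularGroup MatrixGroups

lemma gaussIter_succ_eq_inv_fract (x : ℝ) (k : ℕ) :
    gaussIter x (k + 1) = (Int.fract (gaussIter x k))⁻¹ := by
  rw [gaussIter, one_div, Int.self_sub_floor]

lemma gaussIter_one (x : ℝ) : gaussIter x 1 = (Int.fract x)⁻¹ :=
  gaussIter_succ_eq_inv_fract x 0

lemma gaussIter_add (x : ℝ) (k n : ℕ) :
    gaussIter x (k + n) = gaussIter (gaussIter x k) n := by
  induction n with
  | zero => rfl
  | succ n ih => rw [← add_assoc, gaussIter_succ_eq_inv_fract, gaussIter_succ_eq_inv_fract, ih]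

lemma cfDigit_add (x : ℝ) (k n : ℕ) : cfDigit x (k + n) = cfDigit (gaussIter x k) n := by
  rw [cfDigit, cfDigit, gaussIter_add]

lemma Irrational.fract {x : ℝ} (hx : Irrational x) : Irrational (Int.fract x) := by
  rw [← Int.self_sub_floor]
  exact hx.sub_intCast _

lemma irrational_gaussIter {x : ℝ} (hx : Irrational x) (k : ℕ) : Irrational (gaussIter x k) := by
  induction k with
  | zero => exact hx
  | succ k ih => rw [gaussIter_succ_eq_inv_fract]; exact ih.fract.inv

lemma gaussIter_eq_floor_add_inv (x : ℝ) (k : ℕ) :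
    gaussIter x k = cfDigit x k + (gaussIter x (k + 1))⁻¹ := by
  rw [gaussIter_succ_eq_inv_fract, inv_inv, cfDigit, Int.floor_add_fract]

lemma GenContFract.of_s_get?_eq_cfDigit {x : ℝ} (hx : Irrational x) (n : ℕ) :
    (GenContFract.of x).s.get? n = some ⟨1, cfDigit x (n + 1)⟩ := by
  induction n generalizing x with
  | zero =>
    rw [← Stream'.Seq.head, GenContFract.of_s_head hx.fract.ne_zero, cfDigit, gaussIter_one]
  | succ n ih =>
    rw [GenContFract.of_s_succ, ← gaussIter_one,
      ih (irrational_gaussIter hx 1), ← cfDigit_add, add_comm 1]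

lemma eq_of_cfDigit_eq {x y : ℝ} (hx : Irrational x) (hy : Irrational y)
    (h : ∀ i, cfDigit x i = cfDigit y i) : x = y := by
  have hof : GenContFract.of x = GenContFract.of y := by
    refine GenContFract.ext ?_ (Stream'.Seq.ext fun n => ?_)
    · rw [GenContFract.of_h_eq_floor, GenContFract.of_h_eq_floor]
      exact_mod_cast h 0
    · rw [GenContFract.of_s_get?_eq_cfDigit hx, GenContFract.of_s_get?_eq_cfDigit hy, h]
  exact tendsto_nhds_unique (GenContFract.of_convergence x)
    (hof ▸ GenContFract.of_convergence y)

def ShareGaussTail (x y : ℝ) : Prop := ∃ m n, gaussIter x m = gaussIter y n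

namespace ShareGaussTail

lemma refl (x : ℝ) : ShareGaussTail x x := ⟨0, 0, rfl⟩

lemma symm {x y : ℝ} (h : ShareGaussTail x y) : ShareGaussTail y x :=
  let ⟨m, n, h⟩ := h; ⟨n, m, h.symm⟩

lemma trans {x y z : ℝ} (hxy : ShareGaussTail x y) (hyz : ShareGaussTail y z) :
    ShareGaussTail x z := by
  obtain ⟨m, n, hmn⟩ := hxy
  obtain ⟨n', l, hnl⟩ := hyz
  exact ⟨m + n', l + n, by rw [gaussIter_add, hmn, ← gaussIter_add, add_comm n,
    gaussIter_add, hnl, ← gaussIter_add]⟩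

end ShareGaussTail

lemma shareGaussTail_gaussIter (x : ℝ) (k : ℕ) : ShareGaussTail (gaussIter x k) x :=
  ⟨0, k, rfl⟩

lemma shareGaussTail_add_intCast (x : ℝ) (n : ℤ) : ShareGaussTail (x + n) x :=
  ⟨1, 1, by rw [gaussIter_one, gaussIter_one, Int.fract_add_intCast]⟩

lemma shareGaussTail_inv_of_pos {x : ℝ} (hx : Irrational x) (hpos : 0 < x) :
    ShareGaussTail x⁻¹ x := by
  rcases hx.ne_one.lt_or_gt with hlt | hgt
  · refine ⟨0, 1, ?_⟩
    rw [gaussIter_one, gaussIter, Int.fract_eq_self.2 ⟨hpos.le, hlt⟩]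
  · refine ⟨1, 0, ?_⟩
    rw [gaussIter_one, gaussIter, Int.fract_eq_self.2 ⟨by positivity, inv_lt_one_of_one_lt₀ hgt⟩,
      inv_inv]

lemma shareGaussTail_neg {x : ℝ} (hx : Irrational x) : ShareGaussTail (-x) x := by
  set f := Int.fract x
  have hf : Irrational f := hx.fract
  have hf0 : 0 < f := (Int.fract_nonneg x).lt_of_ne' hf.ne_zero
  have hf1 : f < 1 := Int.fract_lt_one x
  -- `gaussIter (-x) 1 = (1 - f)⁻¹ = (f⁻¹ - 1)⁻¹ + 1` while `gaussIter x 1 = f⁻¹`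
  have hu : 0 < f⁻¹ - 1 := sub_pos.2 (one_lt_inv₀ hf0 |>.2 hf1)
  have key : ShareGaussTail (1 - f)⁻¹ f⁻¹ := by
    have hsplit : (1 - f)⁻¹ = (f⁻¹ - 1)⁻¹ + (1 : ℤ) := by
      have : 1 - f ≠ 0 := by linarith
      field_simp
      ring
    rw [hsplit]
    refine ((shareGaussTail_add_intCast _ 1).trans
      (shareGaussTail_inv_of_pos (by simpa using hf.inv.sub_intCast 1) hu)).trans ?_
    simpa [sub_eq_add_neg] using shareGaussTail_add_intCast f⁻¹ (-1)
  refine (shareGaussTail_gaussIter (-x) 1).symm.trans ?_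
  rw [gaussIter_one, Int.fract_neg hf.ne_zero]
  exact key.trans (gaussIter_one x ▸ shareGaussTail_gaussIter x 1)

lemma shareGaussTail_inv {x : ℝ} (hx : Irrational x) : ShareGaussTail x⁻¹ x := by
  rcases hx.ne_zero.lt_or_gt with hneg | hpos
  · have h : x⁻¹ = -(-x)⁻¹ := by rw [inv_neg, neg_neg]
    rw [h]
    exact (shareGaussTail_neg hx.neg.inv).trans <|
      (shareGaussTail_inv_of_pos hx.neg (neg_pos.2 hneg)).trans (shareGaussTail_neg hx)
  · exact shareGaussTail_inv_of_pos hx hpos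

noncomputable def moebius (M : Matrix (Fin 2) (Fin 2) ℤ) (x : ℝ) : ℝ :=
  (M 0 0 * x + M 0 1) / (M 1 0 * x + M 1 1)

lemma Irrational.eq_zero_of_intCast_mul_add_intCast_eq_zero {x : ℝ} (hx : Irrational x)
    {c d : ℤ} (h : c * x + d = 0) : c = 0 ∧ d = 0 := by
  by_cases hc : c = 0
  · subst hc
    simp only [Int.cast_zero, zero_mul, zero_add, Int.cast_eq_zero] at h
    exact ⟨rfl, h⟩
  · exact absurd h ((hx.intCast_mul hc).add_intCast d).ne_zero

lemma moebius_denom_ne_zero {M : Matrix (Fin 2) (Fin 2) ℤ} (hM : M.det ≠ 0) {x : ℝ}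
    (hx : Irrational x) : (M 1 0 : ℝ) * x + M 1 1 ≠ 0 := fun h => by
  obtain ⟨h0, h1⟩ := hx.eq_zero_of_intCast_mul_add_intCast_eq_zero h
  exact hM (by rw [det_fin_two, h0, h1]; ring)

lemma moebius_one (x : ℝ) : moebius 1 x = x := by
  simp [moebius]

lemma moebius_mul (M N : Matrix (Fin 2) (Fin 2) ℤ) {x : ℝ} (hN : (N 1 0 : ℝ) * x + N 1 1 ≠ 0) :
    moebius (M * N) x = moebius M (moebius N x) := by
  simp only [moebius, mul_apply, Fin.sum_univ_two, Int.cast_add, Int.cast_mul]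
  rw [mul_div_assoc', mul_div_assoc', div_add' _ _ _ hN, div_add' _ _ _ hN,
    div_div_div_cancel_right₀ hN]
  ring_nf

lemma moebius_ratCast (M : Matrix (Fin 2) (Fin 2) ℤ) (q : ℚ) :
    moebius M q = ((M 0 0 * q + M 0 1) / (M 1 0 * q + M 1 1) : ℚ) := by
  simp [moebius]

lemma moebius_adjugate_moebius {M : Matrix (Fin 2) (Fin 2) ℤ} (hM : M.det ≠ 0) {x : ℝ}
    (hx : Irrational x) : moebius M.adjugate (moebius M x) = x := by
  rw [← moebius_mul _ _ (moebius_denom_ne_zero hM hx), adjugate_mul]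
  have : (M.det : ℝ) ≠ 0 := Int.cast_ne_zero.2 hM
  simp only [moebius, Matrix.smul_apply, one_apply_eq, one_apply_ne, Int.zsmul_eq_mul, mul_one,
    mul_zero, ne_eq, zero_ne_one, one_ne_zero, not_false_eq_true, Int.cast_zero, add_zero, zero_mul,
    zero_add]
  field_simp

lemma irrational_moebius {M : Matrix (Fin 2) (Fin 2) ℤ} (hM : M.det ≠ 0) {x : ℝ}
    (hx : Irrational x) : Irrational (moebius M x) := by
  rintro ⟨q, hq⟩
  exact hx ⟨_, (moebius_ratCast M.adjugate q).symm.trans (hq ▸ moebius_adjugate_moebius hM hx)⟩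

lemma shareGaussTail_moebius_SL (γ : SL(2, ℤ)) {x : ℝ} (hx : Irrational x) :
    ShareGaussTail (moebius γ x) x := by
  have hγ : γ ∈ Subgroup.closure {S, T} := SpecialLinearGroup.SL2Z_generators ▸ Subgroup.mem_top γ
  induction hγ using Subgroup.closure_induction generalizing x with
  | mem γ hγ =>
    rcases hγ with rfl | rfl
    · have hS : moebius S x = -x⁻¹ := by simp [moebius, coe_S, neg_div]
      rw [hS]
      exact (shareGaussTail_neg hx.inv).trans (shareGaussTail_inv hx)
    · have hT : moebius T x = x + (1 : ℤ) := by simp [moebius, coe_T]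
      rw [hT]
      exact shareGaussTail_add_intCast x 1
  | one =>
    rw [Matrix.SpecialLinearGroup.coe_one, moebius_one]
    exact .refl x
  | mul γ δ _ _ ihγ ihδ =>
    have hδ : (δ : Matrix (Fin 2) (Fin 2) ℤ).det ≠ 0 := by simp
    simp only [Matrix.SpecialLinearGroup.coe_mul]
    rw [moebius_mul _ _ (moebius_denom_ne_zero hδ hx)]
    exact (ihγ (irrational_moebius hδ hx)).trans (ihδ hx)
  | inv γ _ ih =>
    have hdet : ((γ⁻¹ : SL(2, ℤ)) : Matrix (Fin 2) (Fin 2) ℤ).det ≠ 0 := by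
      rw [Matrix.SpecialLinearGroup.det_coe]; exact one_ne_zero
    have hback : moebius γ (moebius ↑γ⁻¹ x) = x := by
      rw [← moebius_mul _ _ (moebius_denom_ne_zero hdet hx)]
      simp only [← Matrix.SpecialLinearGroup.coe_mul, mul_inv_cancel,
        Matrix.SpecialLinearGroup.coe_one, moebius_one]
    simpa only [hback] using (ih (irrational_moebius hdet hx)).symm

lemma shareGaussTail_moebius {M : Matrix (Fin 2) (Fin 2) ℤ} (hM : IsUnit M.det) {x : ℝ}
    (hx : Irrational x) : ShareGaussTail (moebius M x) x := by
  rcases Int.isUnit_iff.1 hM with hdet | hdet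
  · exact shareGaussTail_moebius_SL ⟨M, hdet⟩ hx
  · -- compose with the reflection `x ↦ -x` to land in `SL(2, ℤ)`
    let R : Matrix (Fin 2) (Fin 2) ℤ := !![-1, 0; 0, 1]
    have hMR : moebius M x = moebius (M * R) (-x) := by
      rw [moebius_mul _ _ (by simp [R])]
      simp [R, moebius]
    rw [hMR]
    exact (shareGaussTail_moebius_SL ⟨M * R, by simp [R, hdet]⟩ hx.neg).trans
      (shareGaussTail_neg hx)

lemma gaussIter_eq_moebius {x : ℝ} (hx : Irrational x) (k : ℕ) :
    gaussIter x k = moebius !![cfDigit x k, 1; 1, 0] (gaussIter x (k + 1)) := by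
  have hne := (irrational_gaussIter hx (k + 1)).ne_zero
  rw [gaussIter_eq_floor_add_inv x k]
  simp only [moebius, of_apply, cons_val', cons_val_zero, cons_val_fin_one, cons_val_one,
    Int.cast_one, one_mul, Int.cast_zero, add_zero]
  field_simp

lemma exists_moebius_gaussIter {x : ℝ} (hx : Irrational x) (k : ℕ) :
    ∃ M : Matrix (Fin 2) (Fin 2) ℤ, IsUnit M.det ∧ x = moebius M (gaussIter x k) := by
  induction k with
  | zero => exact ⟨1, by simp, (moebius_one x).symm⟩
  | succ k ih =>
    obtain ⟨M, hM, hxM⟩ := ih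
    refine ⟨M * !![cfDigit x k, 1; 1, 0], by simp [hM], ?_⟩
    rw [moebius_mul _ _ (by simpa using (irrational_gaussIter hx (k + 1)).ne_zero),
      ← gaussIter_eq_moebius hx, ← hxM]

lemma ShareGaussTail.exists_moebius {x y : ℝ} (hx : Irrational x) (hy : Irrational y)
    (h : ShareGaussTail y x) : ∃ M : Matrix (Fin 2) (Fin 2) ℤ, IsUnit M.det ∧ y = moebius M x := by
  obtain ⟨m, n, hmn⟩ := h
  obtain ⟨P, hP, hyP⟩ := exists_moebius_gaussIter hy m
  obtain ⟨Q, hQ, hxQ⟩ := exists_moebius_gaussIter hx n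
  have hz : gaussIter x n = moebius Q.adjugate x := by
    conv_rhs => rw [hxQ]
    exact (moebius_adjugate_moebius hQ.ne_zero (irrational_gaussIter hx n)).symm
  refine ⟨P * Q.adjugate, by simp [det_adjugate, hP, hQ], ?_⟩
  rw [moebius_mul _ _ (moebius_denom_ne_zero (by simp [det_adjugate, hQ.ne_zero]) hx), ← hz,
    ← hmn, ← hyP]

lemma shareGaussTail_iff_cfDigit {x y : ℝ} (hx : Irrational x) (hy : Irrational y) :
    ShareGaussTail y x ↔ ∃ k m : ℕ, ∀ i, cfDigit x (k + i) = cfDigit y (m + i) := by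
  constructor
  · rintro ⟨m, k, hmk⟩
    exact ⟨k, m, fun i => by rw [cfDigit_add, cfDigit_add, hmk]⟩
  · rintro ⟨k, m, h⟩
    refine ⟨m, k, eq_of_cfDigit_eq (irrational_gaussIter hy m) (irrational_gaussIter hx k)
      fun i => ?_⟩
    rw [← cfDigit_add, ← cfDigit_add, h]

lemma exists_det_eq_moebius_iff (x y : ℝ) :
    (∃ a b c d : ℤ, (a * d - b * c = 1 ∨ a * d - b * c = -1) ∧
        y = (a * x + b) / (c * x + d)) ↔
    ∃ M : Matrix (Fin 2) (Fin 2) ℤ, IsUnit M.det ∧ y = moebius M x := by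
  constructor
  · rintro ⟨a, b, c, d, hdet, hy⟩
    exact ⟨!![a, b; c, d], by rwa [det_fin_two_of, Int.isUnit_iff], by simpa [moebius] using hy⟩
  · rintro ⟨M, hM, hy⟩
    exact ⟨M 0 0, M 0 1, M 1 0, M 1 1, by rwa [← det_fin_two, ← Int.isUnit_iff], hy⟩

/-- Serret's theorem: two irrational numbers are `GL(2,ℤ)`-equivalent iff their
regular continued fraction expansions have the same tail. -/
theorem stmt_1 (α β : ℝ) (hα : Irrational α) (hβ : Irrational β) :
    (∃ a b c d : ℤ, (a * d - b * c = 1 ∨ a * d - b * c = -1) ∧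
        β = (a * α + b) / (c * α + d)) ↔
    (∃ k m : ℕ, ∀ i : ℕ, cfDigit α (k + i) = cfDigit β (m + i)) := by
  rw [exists_det_eq_moebius_iff, ← shareGaussTail_iff_cfDigit hα hβ]
  exact ⟨fun ⟨M, hM, hβM⟩ => hβM ▸ shareGaussTail_moebius hM hα,
    ShareGaussTail.exists_moebius hα hβ⟩
end

section
/- Let α be an irrational real number and let a, b, c, d be integers with ad − bc = ±1, and set β = (aα + b)/(cα + d). Then cα + d ≠ 0 and |cα + d| · G_β = G_α, where t · G denotes the subgroup {t x : x ∈ G} of ℝ. In particular, multiplication by the positive real number |cα + d| is an order isomorphism from G_β onto G_α. -/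
/-- The additive subgroup `ℤα + ℤ` of `ℝ`. -/
def Gset (α : ℝ) : Set ℝ := {x : ℝ | ∃ m n : ℤ, x = m * α + n}

/-- If `β = (aα + b)/(cα + d)` with `ad - bc = ±1` and `α` irrational, then
`cα + d ≠ 0` and `|cα + d| · G_β = G_α`; in particular multiplication by the
positive number `|cα + d|` is an order isomorphism from `G_β` onto `G_α`. -/
theorem stmt_5 (α β : ℝ) (hα : Irrational α) (a b c d : ℤ)
    (hdet : a * d - b * c = 1 ∨ a * d - b * c = -1)
    (hβ : β = (a * α + b) / (c * α + d)) :
    (c * α + d ≠ 0) ∧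
    (fun x : ℝ => |c * α + d| * x) '' Gset β = Gset α ∧
    (0 < |c * α + d| ∧
      ∀ x ∈ Gset β, ∀ y ∈ Gset β,
        (x ≤ y ↔ |c * α + d| * x ≤ |c * α + d| * y)) := by
  have hD : (c : ℝ) * α + d ≠ 0 := by
    intro h
    rcases eq_or_ne c 0 with hc | hc
    · subst hc
      simp at h
      have hd : d = 0 := by exact_mod_cast h
      subst hd
      rcases hdet with h1 | h1 <;> simp at h1
    · have hcR : (c : ℝ) ≠ 0 := by exact_mod_cast hc
      have : α = ((-d / c : ℚ) : ℝ) := by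
        push_cast
        field_simp
        linarith
      exact (Rat.not_irrational _) (this ▸ hα)
  have hβD : ((c : ℝ) * α + d) * β = a * α + b := by
    rw [hβ, mul_div_cancel₀ _ hD]
  have hpos : 0 < |(c : ℝ) * α + d| := abs_pos.mpr hD
  refine ⟨hD, ?_, hpos, ?_⟩
  · ext x
    constructor
    · rintro ⟨y, ⟨m, n, rfl⟩, rfl⟩
      rcases abs_cases ((c : ℝ) * α + d) with ⟨hab, _⟩ | ⟨hab, _⟩
      · refine ⟨m * a + n * c, m * b + n * d, ?_⟩
        simp only
        rw [hab]
        push_cast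
        linear_combination (m : ℝ) * hβD
      · refine ⟨-(m * a + n * c), -(m * b + n * d), ?_⟩
        simp only
        rw [hab]
        push_cast
        linear_combination (-(m : ℝ)) * hβD
    · rintro ⟨m, n, rfl⟩
      rcases abs_cases ((c : ℝ) * α + d) with ⟨hab, _⟩ | ⟨hab, _⟩ <;>
        rcases hdet with he | he
      -- σ = 1, det = 1, s = 1
      · have heR : (a : ℝ) * d - b * c = 1 := by exact_mod_cast he
        refine ⟨(d * m - c * n) * β + (a * n - b * m),
          ⟨d * m - c * n, a * n - b * m, by push_cast; ring⟩, ?_⟩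
        simp only
        rw [hab]
        linear_combination ((d : ℝ) * m - c * n) * hβD + ((m : ℝ) * α + n) * heR
      -- σ = 1, det = -1, s = -1
      · have heR : (a : ℝ) * d - b * c = -1 := by exact_mod_cast he
        refine ⟨(-(d * m - c * n)) * β + (-(a * n - b * m)),
          ⟨-(d * m - c * n), -(a * n - b * m), by push_cast; ring⟩, ?_⟩
        simp only
        rw [hab]
        linear_combination (-((d : ℝ) * m - c * n)) * hβD + (-((m : ℝ) * α + n)) * heR
      -- σ = -1, det = 1, s = -1
      · have heR : (a : ℝ) * d - b * c = 1 := by exact_mod_cast he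
        refine ⟨(-(d * m - c * n)) * β + (-(a * n - b * m)),
          ⟨-(d * m - c * n), -(a * n - b * m), by push_cast; ring⟩, ?_⟩
        simp only
        rw [hab]
        linear_combination ((d : ℝ) * m - c * n) * hβD + ((m : ℝ) * α + n) * heR
      -- σ = -1, det = -1, s = 1
      · have heR : (a : ℝ) * d - b * c = -1 := by exact_mod_cast he
        refine ⟨(d * m - c * n) * β + (a * n - b * m),
          ⟨d * m - c * n, a * n - b * m, by push_cast; ring⟩, ?_⟩
        simp only
        rw [hab]
        linear_combination (-((d : ℝ) * m - c * n)) * hβD + (-((m : ℝ) * α + n)) * heR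
  · intro x _ y _
    exact ⟨fun h => by nlinarith, fun h => le_of_mul_le_mul_left h hpos⟩
end

section
/- Let G be an additive subgroup of ℝ and let φ : G → ℝ be an additive group homomorphism that is strictly monotone increasing (x < y implies φ(x) < φ(y)). If G ≠ {0}, then there exists a real number t > 0 such that φ(x) = t x for every x ∈ G. -/
/-- A strictly increasing additive homomorphism from a nonzero subgroup of `ℝ`
to `ℝ` is multiplication by a positive scalar. -/
theorem stmt_7 (G : AddSubgroup ℝ) (hG : G ≠ ⊥) (φ : G →+ ℝ)
    (hmono : ∀ x y : G, x < y → φ x < φ y) :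
    ∃ t : ℝ, 0 < t ∧ ∀ x : G, φ x = t * (x : ℝ) := by
  -- get a nonzero element
  obtain ⟨a0, ha0⟩ : ∃ a : G, a ≠ 0 := by
    by_contra h
    push_neg at h
    apply hG
    ext x
    simp only [AddSubgroup.mem_bot]
    constructor
    · intro hx
      have := h ⟨x, hx⟩
      simpa using congrArg (Subtype.val) this
    · rintro rfl; exact zero_mem G
  have ha0' : (a0 : ℝ) ≠ 0 := by
    intro h
    exact ha0 (Subtype.ext h)
  -- WLOG positive element
  obtain ⟨a, ha⟩ : ∃ a : G, 0 < (a : ℝ) := by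
    rcases lt_or_gt_of_ne ha0' with h | h
    · exact ⟨-a0, by simpa using neg_pos.mpr h⟩
    · exact ⟨a0, h⟩
  have hpos : ∀ x : G, 0 < (x : ℝ) → 0 < φ x := by
    intro x hx
    have := hmono 0 x (by exact_mod_cast hx)
    simpa using this
  have mono_int : ∀ (m n : ℤ) (x y : G), (m : ℝ) * x < (n : ℝ) * y →
      (m : ℝ) * φ x < (n : ℝ) * φ y := by
    intro m n x y h
    have h' : (m • x : G) < (n • y : G) := by
      rw [← Subtype.coe_lt_coe]
      push_cast
      simpa using h
    have := hmono _ _ h'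
    simpa [map_zsmul, zsmul_eq_mul] using this
  have key : ∀ x y : G, 0 < (x : ℝ) → φ y * x = φ x * y := by
    intro x y hx
    have hφx := hpos x hx
    by_contra hne
    rcases lt_or_gt_of_ne hne with h | h
    · -- φ y / φ x < y / x
      have hdiv : φ y / φ x < (y : ℝ) / x := by
        rw [div_lt_div_iff₀ hφx hx]; linarith
      obtain ⟨q, hq1, hq2⟩ := exists_rat_btwn hdiv
      have hden : (0 : ℝ) < (q.den : ℝ) := by exact_mod_cast q.pos
      have hnum : (q.num : ℝ) = (q : ℝ) * (q.den : ℝ) := by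
        rw [Rat.cast_def]; field_simp
      have h1 : (q.num : ℝ) * x < ((q.den : ℤ) : ℝ) * y := by
        rw [lt_div_iff₀ hx] at hq2
        push_cast
        nlinarith
      have h2 := mono_int q.num q.den x y h1
      rw [div_lt_iff₀ hφx] at hq1
      push_cast at h2
      nlinarith
    · have hdiv : (y : ℝ) / x < φ y / φ x := by
        rw [div_lt_div_iff₀ hx hφx]; linarith
      obtain ⟨q, hq1, hq2⟩ := exists_rat_btwn hdiv
      have hden : (0 : ℝ) < (q.den : ℝ) := by exact_mod_cast q.pos
      have hnum : (q.num : ℝ) = (q : ℝ) * (q.den : ℝ) := by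
        rw [Rat.cast_def]; field_simp
      have h1 : ((q.den : ℤ) : ℝ) * y < (q.num : ℝ) * x := by
        rw [div_lt_iff₀ hx] at hq1
        push_cast
        nlinarith
      have h2 := mono_int q.den q.num y x h1
      rw [lt_div_iff₀ hφx] at hq2
      push_cast at h2
      nlinarith
  refine ⟨φ a / a, div_pos (hpos a ha) ha, ?_⟩
  intro x
  have := key a x ha
  field_simp
  linarith
end

section
/- Let G and H be nonzero additive subgroups of ℝ, each equipped with the linear order induced from ℝ. Then there exists an order isomorphism (an additive group isomorphism φ : G → H with x ≤ y ⇔ φ(x) ≤ φ(y)) between G and H if and only if there exists a real number t > 0 with H = t · G = {t x : x ∈ G}. -/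
/-!
Fix `a > 0` in `G`. An order isomorphism `φ` is strictly monotone and additive, so for integers
`m` and `n > 0` we have `m a < n y ↔ m φ(a) < n φ(y)`. Thus `y / a` and `φ(y) / φ(a)` have the same
rationals below them, hence are equal, and `φ` is multiplication by `t = φ(a) / a > 0`. Conversely,
multiplication by `t > 0` is an order isomorphism from `G` onto `t G`.
-/

lemma rat_lt_div_iff {K : Type*} [Field K] [LinearOrder K] [IsStrictOrderedRing K] {x y : K}
    (hx : 0 < x) (q : ℚ) : (q : K) < y / x ↔ q.num * x < q.den * y := by
  have hden : (0 : K) < q.den := by exact_mod_cast q.den_pos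
  rw [lt_div_iff₀ hx, Rat.cast_def, div_mul_eq_mul_div, div_lt_iff₀ hden, mul_comm y]

namespace AddSubgroup

theorem exists_pos_mem_of_ne_bot {α : Type*} [AddCommGroup α] [LinearOrder α]
    [IsOrderedAddMonoid α] {G : AddSubgroup α} (hG : G ≠ ⊥) : ∃ a : G, (0 : α) < a := by
  obtain ⟨a, ha⟩ := ne_bot_iff_exists_ne_zero.mp hG
  exact ⟨⟨|(a : α)|, abs_mem_iff.2 a.2⟩, abs_pos.2 (by simpa using ha)⟩

theorem exists_pos_eq_mul_of_strictMono {G : AddSubgroup ℝ} (hG : G ≠ ⊥) (f : G →+ ℝ)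
    (hf : StrictMono f) : ∃ t : ℝ, 0 < t ∧ ∀ y : G, f y = t * y := by
  obtain ⟨a, ha⟩ := exists_pos_mem_of_ne_bot hG
  have hfa : 0 < f a := by simpa using hf (show (0 : G) < a from ha)
  refine ⟨f a / a, div_pos hfa ha, fun y => ?_⟩
  have h : f y / f a = y / a := eq_of_forall_rat_lt_iff_lt fun q => by
    rw [rat_lt_div_iff hfa, rat_lt_div_iff ha, ← zsmul_eq_mul, ← nsmul_eq_mul, ← map_zsmul,
      ← map_nsmul, hf.lt_iff_lt, ← Subtype.coe_lt_coe]
    simp only [coe_zsmul, coe_nsmul, zsmul_eq_mul, nsmul_eq_mul]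
  field_simp at h ⊢
  linarith

theorem exists_pos_coe_eq_image_mul_of_addEquiv {G H : AddSubgroup ℝ} (hG : G ≠ ⊥)
    (φ : G ≃+ H) (hφ : ∀ x y : G, x ≤ y ↔ φ x ≤ φ y) :
    ∃ t : ℝ, 0 < t ∧ (H : Set ℝ) = (fun x : ℝ => t * x) '' (G : Set ℝ) := by
  obtain ⟨t, ht, hφt⟩ := exists_pos_eq_mul_of_strictMono hG (H.subtype.comp φ.toAddMonoidHom)
    (strictMono_of_le_iff_le hφ)
  refine ⟨t, ht, Set.ext fun z => ⟨fun hz => ?_, ?_⟩⟩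
  · exact ⟨φ.symm ⟨z, hz⟩, SetLike.coe_mem _, by simpa using (hφt (φ.symm ⟨z, hz⟩)).symm⟩
  · rintro ⟨x, hx, rfl⟩
    simp [← hφt ⟨x, hx⟩]

theorem exists_addEquiv_le_iff_of_coe_eq_image_mul {G H : AddSubgroup ℝ} {t : ℝ} (ht : 0 < t)
    (hH : (H : Set ℝ) = (fun x : ℝ => t * x) '' (G : Set ℝ)) :
    ∃ φ : G ≃+ H, ∀ x y : G, x ≤ y ↔ φ x ≤ φ y := by
  have hmap : G.map (AddMonoidHom.mulLeft t) = H := SetLike.coe_injective (by simp [hH])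
  exact ⟨(G.equivMapOfInjective _ (mul_right_injective₀ ht.ne')).trans
    (AddEquiv.addSubgroupCongr hmap), fun _ _ => (mul_le_mul_iff_right₀ ht).symm⟩

end AddSubgroup

theorem stmt_8_general (G H : AddSubgroup ℝ) (hG : G ≠ ⊥) :
    (∃ φ : G ≃+ H, ∀ x y : G, x ≤ y ↔ φ x ≤ φ y) ↔
    (∃ t : ℝ, 0 < t ∧ (H : Set ℝ) = (fun x : ℝ => t * x) '' (G : Set ℝ)) :=
  ⟨fun ⟨φ, hφ⟩ => AddSubgroup.exists_pos_coe_eq_image_mul_of_addEquiv hG φ hφ,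
    fun ⟨_, ht, hH⟩ => AddSubgroup.exists_addEquiv_le_iff_of_coe_eq_image_mul ht hH⟩

/-- Two nonzero subgroups of `ℝ` (with the induced order) are order isomorphic
iff one is a positive scalar multiple of the other. -/
theorem stmt_8 (G H : AddSubgroup ℝ) (hG : G ≠ ⊥) (hH : H ≠ ⊥) :
    (∃ φ : G ≃+ H, ∀ x y : G, x ≤ y ↔ φ x ≤ φ y) ↔
    (∃ t : ℝ, 0 < t ∧ (H : Set ℝ) = (fun x : ℝ => t * x) '' (G : Set ℝ)) :=
  stmt_8_general G H hG
end

section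
/- (Classification in rank 2; the Effros–Shen case of Theorem 1(i).) Let α and β be irrational real numbers. The ordered groups G_α and G_β (subgroups of ℝ with the induced order) are order-isomorphic if and only if there exist integers a, b, c, d with ad − bc = ±1 and β = (aα + b)/(cα + d). -/
/-!
An order isomorphism between subgroups of `ℝ` preserves every comparison `m • x ≤ n • g`, hence
every ratio `x / g`, so it is multiplication by some `L > 0`; thus `G_α ≅ G_β` iff
`L • G_α = G_β`. Expanding `L * α, L` in the basis `(β, 1)` and `L⁻¹ * β, L⁻¹` in the basis
`(α, 1)` gives two integer matrices that are mutually inverse because `β` is irrational, so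
their determinants are `±1`. Conversely, if `β = (a * α + b) / (c * α + d)` with `ad - bc = ±1`,
then `G_β * (c * α + d) = G_α`.
-/

/-- The additive subgroup `ℤα + ℤ = {mα + n : m, n ∈ ℤ}` of `ℝ`. -/
def Gsub (α : ℝ) : AddSubgroup ℝ where
  carrier := {x : ℝ | ∃ m n : ℤ, x = m * α + n}
  add_mem' := by
    rintro x y ⟨m, n, rfl⟩ ⟨m', n', rfl⟩
    exact ⟨m + m', n + n', by push_cast; ring⟩
  zero_mem' := ⟨0, 0, by simp⟩
  neg_mem' := by
    rintro x ⟨m, n, rfl⟩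
    exact ⟨-m, -n, by push_cast; ring⟩

theorem div_le_div_of_forall_intCast_mul_le {a b c d : ℝ} (hb : 0 < b) (hd : 0 < d)
    (h : ∀ m n : ℤ, m * a ≤ n * b → m * c ≤ n * d) : c / d ≤ a / b := by
  by_contra! hlt
  obtain ⟨q, haq, hqc⟩ := exists_rat_btwn hlt
  have hden : (0 : ℝ) < q.den := by exact_mod_cast q.pos
  have hq : (q : ℝ) * q.den = q.num := by exact_mod_cast Rat.mul_den_eq_num q
  rw [div_lt_iff₀ hb] at haq
  rw [lt_div_iff₀ hd] at hqc
  have hle := h q.den q.num (by push_cast; nlinarith)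
  push_cast at hle
  nlinarith

theorem AddMonoidHom.apply_mul_eq_apply_mul_of_strictMono {G : AddSubgroup ℝ} (f : G →+ ℝ)
    (hf : StrictMono f) {g : G} (hg : 0 < g) (x : G) : f x * g = f g * x := by
  have hfg : 0 < f g := by simpa using hf hg
  have hg' : (0 : ℝ) < g := hg
  have key : ∀ y : G, f y / f g ≤ y / g := fun y ↦
    div_le_div_of_forall_intCast_mul_le hg' hfg fun m n hmn ↦ by
      have : m • y ≤ n • g := by simpa [← Subtype.coe_le_coe, zsmul_eq_mul] using hmn
      simpa [zsmul_eq_mul] using hf.monotone this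
  have hneg : (x : ℝ) / g ≤ f x / f g := by
    simpa [neg_div] using key (-x)
  have := le_antisymm (key x) hneg
  field_simp at this
  linarith

theorem AddSubgroup.exists_orderAddEquiv_iff_exists_mul_mem_iff {G H : AddSubgroup ℝ} {g : ℝ}
    (hg : g ∈ G) (hg0 : 0 < g) :
    (∃ φ : G ≃+ H, ∀ x y : G, x ≤ y ↔ φ x ≤ φ y) ↔ ∃ L : ℝ, 0 < L ∧ ∀ x, x ∈ G ↔ L * x ∈ H := by
  constructor
  · rintro ⟨φ, hφ⟩
    set f : G →+ ℝ := H.subtype.comp φ.toAddMonoidHom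
    have hf : StrictMono f := fun x y hxy ↦ by
      simpa [f] using (lt_iff_lt_of_le_iff_le' (hφ y x) (hφ x y)).mp hxy
    set g' : G := ⟨g, hg⟩
    have hlin (x : G) : (φ x : ℝ) = f g' / g * x := by
      have := f.apply_mul_eq_apply_mul_of_strictMono hf (g := g') hg0 x
      field_simp
      exact this
    have hL : 0 < f g' / g := div_pos (by simpa using hf (show 0 < g' from hg0)) hg0
    refine ⟨f g' / g, hL, fun x ↦ ⟨?_, ?_⟩⟩
    · intro hx
      rw [← hlin ⟨x, hx⟩]
      exact (φ _).2
    · intro hx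
      set y := φ.symm ⟨_, hx⟩
      have hy : (f g' / g) * y = (f g' / g) * x := by
        rw [← hlin, φ.apply_symm_apply]
      rw [← mul_left_cancel₀ hL.ne' hy]
      exact y.2
  · rintro ⟨L, hL, hGH⟩
    refine ⟨{ toFun := fun x ↦ ⟨L * x, (hGH x).mp x.2⟩
              invFun := fun y ↦ ⟨L⁻¹ * y, (hGH _).mpr (by simp [hL.ne'])⟩
              left_inv := fun x ↦ by ext; simp [hL.ne']
              right_inv := fun y ↦ by ext; simp [hL.ne']
              map_add' := fun x y ↦ by ext; simp [mul_add] }, fun x y ↦ ?_⟩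
    simp [← Subtype.coe_le_coe, mul_le_mul_iff_right₀ hL]

theorem Irrational.intCast_mul_add_intCast_inj {x : ℝ} (hx : Irrational x) {m n m' n' : ℤ} :
    m * x + n = m' * x + n' ↔ m = m' ∧ n = n' := by
  refine ⟨fun h ↦ ?_, fun ⟨hm, hn⟩ ↦ by rw [hm, hn]⟩
  rcases eq_or_ne m m' with rfl | hm
  · exact ⟨rfl, by simpa using h⟩
  · refine absurd ?_ ((hx.intCast_mul (sub_ne_zero.2 hm)).add_intCast (n - n')).ne_zero
    push_cast
    linarith

theorem self_mem_Gsub (α : ℝ) : α ∈ Gsub α := ⟨1, 0, by simp⟩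

theorem one_mem_Gsub (α : ℝ) : (1 : ℝ) ∈ Gsub α := ⟨0, 1, by simp⟩

theorem mul_mem_Gsub {α β t y : ℝ} (ht : t ∈ Gsub α) (hβt : β * t ∈ Gsub α) (hy : y ∈ Gsub β) :
    y * t ∈ Gsub α := by
  obtain ⟨m, n, rfl⟩ := hy
  rw [add_mul, mul_assoc, ← zsmul_eq_mul, ← zsmul_eq_mul]
  exact add_mem (zsmul_mem hβt m) (zsmul_mem ht n)

theorem exists_eq_div_of_mul_mem_Gsub_iff {α β L : ℝ} (hβ : Irrational β) (hL : L ≠ 0)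
    (h : ∀ x, x ∈ Gsub α ↔ L * x ∈ Gsub β) :
    ∃ a b c d : ℤ, (a * d - b * c = 1 ∨ a * d - b * c = -1) ∧
      β = (a * α + b) / (c * α + d) := by
  obtain ⟨a, b, hab⟩ : L * α ∈ Gsub β := (h α).mp (self_mem_Gsub α)
  obtain ⟨c, d, hcd⟩ : L * 1 ∈ Gsub β := (h 1).mp (one_mem_Gsub α)
  obtain ⟨p, q, hpq⟩ : L⁻¹ * β ∈ Gsub α :=
    (h _).mpr (by rw [mul_inv_cancel_left₀ hL]; exact self_mem_Gsub β)
  obtain ⟨r, s, hrs⟩ : L⁻¹ * 1 ∈ Gsub α :=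
    (h _).mpr (by rw [mul_inv_cancel_left₀ hL]; exact one_mem_Gsub β)
  have hLL := mul_inv_cancel₀ hL
  obtain ⟨hpc, hpd⟩ : p * a + q * c = 1 ∧ p * b + q * d = 0 := by
    refine hβ.intCast_mul_add_intCast_inj.mp ?_
    push_cast
    linear_combination -L * hpq + β * hLL - p * hab - q * hcd
  obtain ⟨-, hrd⟩ : r * a + s * c = 0 ∧ r * b + s * d = 1 := by
    refine hβ.intCast_mul_add_intCast_inj.mp ?_
    push_cast
    linear_combination -L * hrs + hLL - r * hab - s * hcd
  have hdet : (p * s - q * r) * (a * d - b * c) = 1 := by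
    linear_combination (r * b + s * d) * hpc - (r * a + s * c) * hpd + hrd
  refine ⟨p, q, r, s, Int.eq_one_or_neg_one_of_mul_eq_one hdet, ?_⟩
  rw [← hpq, ← hrs]
  field_simp

theorem exists_mul_mem_Gsub_iff_of_eq_div {α β : ℝ} (hβ : Irrational β) {a b c d : ℤ}
    (hdet : a * d - b * c = 1 ∨ a * d - b * c = -1) (hβe : β = (a * α + b) / (c * α + d)) :
    ∃ L : ℝ, 0 < L ∧ ∀ x, x ∈ Gsub α ↔ L * x ∈ Gsub β := by
  set t : ℝ := c * α + d
  have ht0 : t ≠ 0 := fun h ↦ hβ.ne_zero (by rw [hβe, h, div_zero])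
  have hβt : β * t = a * α + b := by rw [hβe, div_mul_cancel₀ _ ht0]
  set u : ℝ := -c * β + a
  have htu : t * u = (a * d - b * c : ℤ) := by
    push_cast
    linear_combination (-c : ℝ) * hβt
  have hdet2 : ((a * d - b * c : ℤ) : ℝ) * (a * d - b * c : ℤ) = 1 := by
    rcases hdet with h | h <;> simp [h]
  have hmem (y : ℝ) : y ∈ Gsub β ↔ y * t ∈ Gsub α := by
    refine ⟨mul_mem_Gsub ⟨c, d, rfl⟩ ⟨a, b, hβt⟩, fun hy ↦ ?_⟩
    -- `α = (d * β - b) / u` is the inverse Möbius transformation, so the roles of `α` and `β` swap.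
    have hαu : α * u ∈ Gsub β := ⟨d, -b, by push_cast; linear_combination -hβt⟩
    have hy' := zsmul_mem (mul_mem_Gsub ⟨-c, a, by push_cast; rfl⟩ hαu hy) (a * d - b * c)
    rwa [zsmul_eq_mul, mul_assoc, htu, ← mul_assoc, mul_comm _ y, mul_assoc, hdet2, mul_one] at hy'
  refine ⟨|t|⁻¹, inv_pos.2 (abs_pos.2 ht0), fun x ↦ ?_⟩
  rw [hmem]
  rcases ht0.lt_or_gt with hneg | hpos
  · rw [abs_of_neg hneg, inv_neg, neg_mul, neg_mul, mul_comm t⁻¹, inv_mul_cancel_right₀ ht0,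
      neg_mem_iff]
  · rw [abs_of_pos hpos, mul_comm t⁻¹, inv_mul_cancel_right₀ ht0]

theorem stmt_9_general (α β : ℝ) (hβ : Irrational β) :
    (∃ φ : Gsub α ≃+ Gsub β, ∀ x y : Gsub α, x ≤ y ↔ φ x ≤ φ y) ↔
    (∃ a b c d : ℤ, (a * d - b * c = 1 ∨ a * d - b * c = -1) ∧
      β = (a * α + b) / (c * α + d)) := by
  rw [AddSubgroup.exists_orderAddEquiv_iff_exists_mul_mem_iff (one_mem_Gsub α) one_pos]
  constructor
  · rintro ⟨L, hL, h⟩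
    exact exists_eq_div_of_mul_mem_Gsub_iff hβ hL.ne' h
  · rintro ⟨a, b, c, d, hdet, hβe⟩
    exact exists_mul_mem_Gsub_iff_of_eq_div hβ hdet hβe

/-- Effros–Shen classification: `G_α` and `G_β` (with the order induced from `ℝ`)
are order isomorphic iff `α` and `β` are `GL(2,ℤ)`-equivalent. -/
theorem stmt_9 (α β : ℝ) (hα : Irrational α) (hβ : Irrational β) :
    (∃ φ : Gsub α ≃+ Gsub β, ∀ x y : Gsub α, x ≤ y ↔ φ x ≤ φ y) ↔
    (∃ a b c d : ℤ, (a * d - b * c = 1 ∨ a * d - b * c = -1) ∧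
      β = (a * α + b) / (c * α + d)) :=
  stmt_9_general α β hβ
end

section
/- (Classification of polycyclic totally ordered dimension groups; honest form of Theorem 1(i).) Let n ≥ 2 and let λ, λ' : Fin n → ℝ be two n-tuples of real numbers, each linearly independent over ℚ. Let G = ℤλ₁ + ⋯ + ℤλₙ and G' = ℤλ'₁ + ⋯ + ℤλ'ₙ be the additive subgroups of ℝ they generate, each with the linear order induced from ℝ. Then G and G' are order-isomorphic if and only if there exist a real number t > 0 and an n × n integer matrix A with det A = ±1 such that λ'ᵢ = t · Σⱼ Aᵢⱼ λⱼ for all i. -/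
/-!
An order isomorphism between subgroups of `ℝ` is multiplication by some `t > 0`: it preserves
every comparison `p • y < q • x` with integer coefficients, hence every ratio `x / y`, because
the rationals are dense. So the two groups are order isomorphic iff `G' = t • G`, i.e. iff
`t • λ` and `λ'` span the same `ℤ`-module; since `λ'` is a `ℤ`-basis of it, that happens iff
the two families differ by a matrix in `GL(n, ℤ)`.
-/

open Set Submodule

theorem Matrix.sum_smul_sum_smul {ι κ μ R M : Type*} [Fintype κ] [Fintype μ] [Semiring R]
    [AddCommMonoid M] [Module R M] (A : Matrix ι κ R) (B : Matrix κ μ R) (v : μ → M) (i : ι) :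
    ∑ j, A i j • ∑ k, B j k • v k = ∑ k, (A * B) i k • v k := by
  simp only [Matrix.mul_apply, Finset.smul_sum, Finset.sum_smul, smul_smul]
  exact Finset.sum_comm

theorem Matrix.sum_one_smul {ι R M : Type*} [Fintype ι] [DecidableEq ι] [Semiring R]
    [AddCommMonoid M] [Module R M] (v : ι → M) (i : ι) :
    ∑ k, (1 : Matrix ι ι R) i k • v k = v i := by
  simp [Matrix.one_apply]

theorem Submodule.span_range_eq_span_range_iff_exists_isUnit_det {ι R M : Type*} [Fintype ι]
    [DecidableEq ι] [CommRing R] [AddCommGroup M] [Module R M] {v w : ι → M}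
    (hw : LinearIndependent R w) :
    span R (range w) = span R (range v) ↔
      ∃ A : Matrix ι ι R, IsUnit A.det ∧ ∀ i, w i = ∑ j, A i j • v j := by
  constructor
  · intro h
    have hwv (i : ι) : ∃ a : ι → R, ∑ j, a j • v j = w i :=
      (mem_span_range_iff_exists_fun R).1 (h ▸ subset_span ⟨i, rfl⟩)
    have hvw (j : ι) : ∃ b : ι → R, ∑ k, b k • w k = v j :=
      (mem_span_range_iff_exists_fun R).1 (h ▸ subset_span ⟨j, rfl⟩)
    choose A hA using hwv
    choose B hB using hvw
    have hAB : Matrix.of A * Matrix.of B = 1 := by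
      ext i k
      refine Fintype.linearIndependent_iffₛ.1 hw _ _ ?_ k
      rw [← Matrix.sum_smul_sum_smul, Matrix.sum_one_smul]
      simp only [Matrix.of_apply, hB, hA]
    exact ⟨Matrix.of A, Matrix.isUnit_det_of_right_inverse hAB, fun i => (hA i).symm⟩
  · rintro ⟨A, hA, hwA⟩
    apply le_antisymm <;> rw [span_le] <;> rintro _ ⟨i, rfl⟩ <;>
      refine (mem_span_range_iff_exists_fun R).2 ?_
    · exact ⟨A i, (hwA i).symm⟩
    · refine ⟨A⁻¹ i, ?_⟩
      simp only [hwA, Matrix.sum_smul_sum_smul, Matrix.nonsing_inv_mul A hA, Matrix.sum_one_smul]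

theorem Rat.cast_mul_lt_iff {K : Type*} [Field K] [LinearOrder K] [IsStrictOrderedRing K]
    (q : ℚ) (a b : K) : (q : K) * b < a ↔ (q.num : K) * b < q.den * a := by
  have hd : (0 : K) < q.den := by exact_mod_cast q.pos
  rw [← mul_lt_mul_iff_right₀ hd, ← mul_assoc, Rat.cast_def, mul_div_cancel₀ _ hd.ne']

namespace AddSubgroup

theorem div_eq_div_of_strictMono {G : AddSubgroup ℝ} {f : G →+ ℝ} (hf : StrictMono f) (x : G)
    {y : G} (hy : 0 < (y : ℝ)) : f x / f y = x / y := by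
  have hfy : 0 < f y := by simpa using hf (show (0 : G) < y from hy)
  refine eq_of_forall_rat_lt_iff_lt fun q => ?_
  rw [lt_div_iff₀ hfy, lt_div_iff₀ hy, Rat.cast_mul_lt_iff, Rat.cast_mul_lt_iff]
  simpa [← Subtype.coe_lt_coe] using hf.lt_iff_lt (a := q.num • y) (b := (q.den : ℤ) • x)

theorem exists_pos_mul_of_strictMono {G : AddSubgroup ℝ} {f : G →+ ℝ} (hf : StrictMono f) :
    ∃ t, 0 < t ∧ ∀ x : G, f x = t * x := by
  by_cases hG : ∃ y : G, 0 < (y : ℝ)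
  · obtain ⟨y, hy⟩ := hG
    have hfy : 0 < f y := by simpa using hf (show (0 : G) < y from hy)
    refine ⟨f y / y, div_pos hfy hy, fun x => ?_⟩
    have := div_eq_div_of_strictMono hf x hy
    field_simp at this ⊢
    linarith
  · push Not at hG
    refine ⟨1, one_pos, fun x => ?_⟩
    have hx : x = 0 := Subtype.ext (le_antisymm (hG x) (by simpa using hG (-x)))
    simp [hx]

theorem exists_orderIso_iff_exists_pos_eq_map (G G' : AddSubgroup ℝ) :
    (∃ φ : G ≃+ G', ∀ x y : G, x ≤ y ↔ φ x ≤ φ y) ↔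
      ∃ t, 0 < t ∧ G' = G.map (AddMonoidHom.mulLeft t) := by
  constructor
  · rintro ⟨φ, hφ⟩
    have hf : StrictMono (G'.subtype.comp φ.toAddMonoidHom) :=
      (Subtype.strictMono_coe _).comp
        (OrderEmbedding.ofMapLEIff φ fun x y => (hφ x y).symm).strictMono
    obtain ⟨t, ht, hφt⟩ := exists_pos_mul_of_strictMono hf
    refine ⟨t, ht, ext fun z => ⟨fun hz => ?_, ?_⟩⟩
    · refine ⟨φ.symm ⟨z, hz⟩, (φ.symm ⟨z, hz⟩).2, ?_⟩
      simpa using (hφt (φ.symm ⟨z, hz⟩)).symm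
    · rintro ⟨x, hx, rfl⟩
      simp [← hφt ⟨x, hx⟩]
  · rintro ⟨t, ht, rfl⟩
    have hinj : Function.Injective (AddMonoidHom.mulLeft t) := mul_right_injective₀ ht.ne'
    refine ⟨G.equivMapOfInjective _ hinj, fun x y => ?_⟩
    rw [← Subtype.coe_le_coe, ← Subtype.coe_le_coe, coe_equivMapOfInjective_apply,
      coe_equivMapOfInjective_apply, AddMonoidHom.coe_mulLeft, mul_le_mul_iff_right₀ ht]

end AddSubgroup

theorem stmt_10_general (n : ℕ) (lam lam' : Fin n → ℝ)
    (hlam' : LinearIndependent ℚ lam')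
    (G G' : AddSubgroup ℝ)
    (hG : G = AddSubgroup.closure (Set.range lam))
    (hG' : G' = AddSubgroup.closure (Set.range lam')) :
    (∃ φ : G ≃+ G', ∀ x y : G, x ≤ y ↔ φ x ≤ φ y) ↔
    (∃ t : ℝ, 0 < t ∧ ∃ A : Matrix (Fin n) (Fin n) ℤ,
      (A.det = 1 ∨ A.det = -1) ∧
      ∀ i, lam' i = t * ∑ j, (A i j : ℝ) * lam j) := by
  rw [AddSubgroup.exists_orderIso_iff_exists_pos_eq_map]
  refine exists_congr fun t => and_congr_right fun _ => ?_
  rw [hG, hG', AddMonoidHom.map_closure, ← range_comp, ← span_int_eq_addSubgroupClosure,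
    ← span_int_eq_addSubgroupClosure, toAddSubgroup_inj,
    Submodule.span_range_eq_span_range_iff_exists_isUnit_det (hlam'.restrict_scalars' ℤ)]
  refine exists_congr fun A => and_congr Int.isUnit_iff (forall_congr' fun i => ?_)
  simp only [Function.comp_apply, AddMonoidHom.coe_mulLeft, zsmul_eq_mul, Finset.mul_sum,
    mul_left_comm]

/-- Classification of polycyclic totally ordered dimension groups: the
`ℤ`-modules `ℤλ₁ + ⋯ + ℤλₙ` and `ℤλ'₁ + ⋯ + ℤλ'ₙ` (with the order induced
from `ℝ`, and `λ`, `λ'` each linearly independent over `ℚ`, `n ≥ 2`) are order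
isomorphic iff `λ' = t · A λ` for some `t > 0` and `A ∈ GL(n, ℤ)`. -/
theorem stmt_10 (n : ℕ) (hn : 2 ≤ n) (lam lam' : Fin n → ℝ)
    (hlam : LinearIndependent ℚ lam) (hlam' : LinearIndependent ℚ lam')
    (G G' : AddSubgroup ℝ)
    (hG : G = AddSubgroup.closure (Set.range lam))
    (hG' : G' = AddSubgroup.closure (Set.range lam')) :
    (∃ φ : G ≃+ G', ∀ x y : G, x ≤ y ↔ φ x ≤ φ y) ↔
    (∃ t : ℝ, 0 < t ∧ ∃ A : Matrix (Fin n) (Fin n) ℤ,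
      (A.det = 1 ∨ A.det = -1) ∧
      ∀ i, lam' i = t * ∑ j, (A i j : ℝ) * lam j) :=
  stmt_10_general n lam lam' hlam' G G' hG hG'
end
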